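/- arXiv:0707.3426 — 5 statements merged into one kernel-verified Lean document; each statement's English description precedes it below -/
import Mathlib

section
/- Let b be a holomorphic map of the open unit disk 𝔻 ⊂ ℂ into itself and let f : 𝔻 → ℂ be a function. If the kernel (z,w) ↦ (1 − b(z)·conj(b(w)))/(1 − z·conj(w)) − f(z)·conj(f(w)) is positive semidefinite on 𝔻, then the kernel (z,w) ↦ 1/(1 − z·conj(w)) − f(z)·conj(f(w))/(1 − b(z)·conj(b(w))) is positive semidefinite on 𝔻. (This is the kernel form of the inequality ‖C_b^* T_f^*‖ ≤ ‖f‖_{H(b)} ≤ 1 for the weighted composition operator on the Hardy space H².) -/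
open Complex Metric ComplexConjugate
open scoped ComplexOrder

noncomputable section

/-- A kernel `K : X → X → ℂ` is positive semidefinite on a set `S`: for all finite
families of points of `S` and scalars, the associated quadratic form is a
nonnegative real number (using the partial order on `ℂ`). -/
def IsPSDKernelOn {X : Type*} (K : X → X → ℂ) (S : Set X) : Prop :=
  ∀ (n : ℕ) (x : Fin n → X), (∀ i, x i ∈ S) → ∀ c : Fin n → ℂ,
    0 ≤ ∑ i, ∑ j, c i * conj (c j) * K (x i) (x j)

/-- If `f` lies in the unit ball of the de Branges–Rovnyak space `H(b)` (expressed by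
positivity of `k^b(z,w) − f(z)·conj(f(w))`), then the kernel
`1/(1 − z·conj w) − f(z)·conj(f(w))/(1 − b(z)·conj(b(w)))` is positive semidefinite. -/
theorem weighted_composition_kernel_psd
    (b f : ℂ → ℂ)
    (hb_holo : DifferentiableOn ℂ b (ball (0 : ℂ) 1))
    (hb_maps : ∀ z ∈ ball (0 : ℂ) 1, b z ∈ ball (0 : ℂ) 1)
    (hpos : IsPSDKernelOn
      (fun z w => (1 - b z * conj (b w)) / (1 - z * conj w) - f z * conj (f w))
      (ball (0 : ℂ) 1)) :
    IsPSDKernelOn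
      (fun z w => (1 - z * conj w)⁻¹ - f z * conj (f w) / (1 - b z * conj (b w)))
      (ball (0 : ℂ) 1) := by
  intro n x hx c
  have hxn : ∀ i, ‖x i‖ < 1 := fun i => mem_ball_zero_iff.mp (hx i)
  have hun : ∀ i, ‖b (x i)‖ < 1 := fun i => mem_ball_zero_iff.mp (hb_maps _ (hx i))
  have hξ : ∀ i j : Fin n, ‖b (x i) * conj (b (x j))‖ < 1 := by
    intro i j
    rw [norm_mul, RCLike.norm_conj]
    nlinarith [norm_nonneg (b (x i)), norm_nonneg (b (x j)), hun i, hun j]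
  have hξx : ∀ i j : Fin n, ‖x i * conj (x j)‖ < 1 := by
    intro i j
    rw [norm_mul, RCLike.norm_conj]
    nlinarith [norm_nonneg (x i), norm_nonneg (x j), hxn i, hxn j]
  have hden : ∀ i j : Fin n, (1 : ℂ) - b (x i) * conj (b (x j)) ≠ 0 := by
    intro i j h
    rw [sub_eq_zero] at h
    have := hξ i j
    rw [← h, norm_one] at this
    exact lt_irrefl _ this
  have hdenx : ∀ i j : Fin n, (1 : ℂ) - x i * conj (x j) ≠ 0 := by
    intro i j h
    rw [sub_eq_zero] at h
    have := hξx i j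
    rw [← h, norm_one] at this
    exact lt_irrefl _ this
  set F : Fin n → Fin n → ℕ → ℂ := fun i j m =>
    (c i * b (x i) ^ m) * conj (c j * b (x j) ^ m) *
      ((1 - b (x i) * conj (b (x j))) / (1 - x i * conj (x j)) -
        f (x i) * conj (f (x j))) with hF
  have hsum : ∀ i j : Fin n, Summable (F i j) := by
    intro i j
    refine ((summable_geometric_of_norm_lt_one (hξ i j)).mul_left
      (c i * conj (c j) *
        ((1 - b (x i) * conj (b (x j))) / (1 - x i * conj (x j)) -
          f (x i) * conj (f (x j))))).congr ?_
    intro m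
    simp only [hF, map_mul, map_pow, mul_pow]
    ring
  have key : ∀ i j : Fin n,
      c i * conj (c j) *
        ((1 - x i * conj (x j))⁻¹ -
          f (x i) * conj (f (x j)) / (1 - b (x i) * conj (b (x j)))) =
      ∑' m : ℕ, F i j m := by
    intro i j
    have hgeo : ∑' m : ℕ, (b (x i) * conj (b (x j))) ^ m
        = (1 - b (x i) * conj (b (x j)))⁻¹ := tsum_geometric_of_norm_lt_one (hξ i j)
    have h1 : ∑' m : ℕ, F i j m =
        (c i * conj (c j) *
          ((1 - b (x i) * conj (b (x j))) / (1 - x i * conj (x j)) -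
            f (x i) * conj (f (x j)))) * (1 - b (x i) * conj (b (x j)))⁻¹ := by
      rw [← hgeo, ← tsum_mul_left]
      refine tsum_congr fun m => ?_
      simp only [hF, map_mul, map_pow, mul_pow]
      ring
    rw [h1]
    field_simp [hden i j, hdenx i j]
  calc ∑ i, ∑ j, c i * conj (c j) *
        ((1 - x i * conj (x j))⁻¹ -
          f (x i) * conj (f (x j)) / (1 - b (x i) * conj (b (x j))))
      = ∑ i, ∑ j, ∑' m : ℕ, F i j m := by
        exact Finset.sum_congr rfl fun i _ => Finset.sum_congr rfl fun j _ => key i j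
    _ = ∑ i, ∑' m : ℕ, ∑ j, F i j m := by
        exact Finset.sum_congr rfl fun i _ => (Summable.tsum_finsetSum fun j _ => hsum i j).symm
    _ = ∑' m : ℕ, ∑ i, ∑ j, F i j m := by
        exact (Summable.tsum_finsetSum fun i _ => summable_sum fun j _ => hsum i j).symm
    _ ≥ 0 := by
        refine tsum_nonneg fun m => ?_
        have := hpos n x hx (fun i => c i * b (x i) ^ m)
        simpa [hF] using this
end
end

section
/- Let b be a holomorphic map of the open unit disk 𝔻 ⊂ ℂ into itself, let N ∈ ℕ, and let f₀,…,f_N : 𝔻 → ℂ be functions. If the kernel (z,w) ↦ (1 − b(z)·conj(b(w)))/(1 − z·conj(w)) − ∑_{m=0}^{N} f_m(z)·conj(f_m(w)) is positive semidefinite on 𝔻, then the kernel (z,w) ↦ 1/(1 − z·conj(w)) − (∑_{m=0}^{N} f_m(z)·conj(f_m(w)))/(1 − b(z)·conj(b(w))) is positive semidefinite on 𝔻. -/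
open Complex Metric ComplexConjugate
open scoped ComplexOrder

noncomputable section

/-! Dividing a positive semidefinite kernel by `1 - b(z)·conj(b(w))` keeps it positive
semidefinite: expanding `1 / (1 - b(z)·conj(b(w)))` as the geometric series
`∑ₜ b(z)ᵗ·conj(b(w)ᵗ)` writes the quotient as a convergent sum of the kernel multiplied by the
rank-one kernels `b(z)ᵗ·conj(b(w)ᵗ)`, each positive semidefinite. Applied to the hypothesis
kernel, the quotient is exactly the kernel of the conclusion. -/

theorem norm_mul_conj_lt_one {z w : ℂ} (hz : z ∈ ball (0 : ℂ) 1) (hw : w ∈ ball (0 : ℂ) 1) :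
    ‖z * conj w‖ < 1 := by
  rw [mem_ball_zero_iff] at hz hw
  rw [norm_mul, RCLike.norm_conj]
  nlinarith [norm_nonneg z, norm_nonneg w]

theorem one_sub_mul_conj_ne_zero {z w : ℂ} (hz : z ∈ ball (0 : ℂ) 1)
    (hw : w ∈ ball (0 : ℂ) 1) : 1 - z * conj w ≠ 0 := by
  intro h
  have h1 : z * conj w = 1 := by linear_combination -h
  simpa [h1] using norm_mul_conj_lt_one hz hw

section PSDKernel

variable {X : Type*} {S : Set X} {K : X → X → ℂ}

theorem IsPSDKernelOn.congr {K' : X → X → ℂ} (hK : IsPSDKernelOn K S)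
    (h : ∀ z ∈ S, ∀ w ∈ S, K z w = K' z w) : IsPSDKernelOn K' S := by
  intro n x hx c
  simpa only [h _ (hx _) _ (hx _)] using hK n x hx c

theorem IsPSDKernelOn.mul_conj (hK : IsPSDKernelOn K S) (g : X → ℂ) :
    IsPSDKernelOn (fun z w => g z * conj (g w) * K z w) S := by
  intro n x hx c
  refine (hK n x hx fun i => c i * g (x i)).trans_eq
    (Finset.sum_congr rfl fun i _ => Finset.sum_congr rfl fun j _ => ?_)
  simp only [map_mul]
  ring

theorem IsPSDKernelOn.tsum {K : ℕ → X → X → ℂ} (hK : ∀ t, IsPSDKernelOn (K t) S)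
    (hsum : ∀ z ∈ S, ∀ w ∈ S, Summable fun t => K t z w) :
    IsPSDKernelOn (fun z w => ∑' t, K t z w) S := by
  intro n x hx c
  have hsum' : ∀ i j, Summable fun t => c i * conj (c j) * K t (x i) (x j) :=
    fun i j => (hsum _ (hx i) _ (hx j)).mul_left _
  calc (0 : ℂ) ≤ ∑' t, ∑ i, ∑ j, c i * conj (c j) * K t (x i) (x j) :=
        tsum_nonneg fun t => hK t n x hx c
    _ = ∑ i, ∑ j, c i * conj (c j) * ∑' t, K t (x i) (x j) := by
        rw [Summable.tsum_finsetSum fun i _ => summable_sum fun j _ => hsum' i j]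
        refine Finset.sum_congr rfl fun i _ => ?_
        rw [Summable.tsum_finsetSum fun j _ => hsum' i j]
        exact Finset.sum_congr rfl fun j _ => tsum_mul_left

theorem IsPSDKernelOn.div_one_sub_mul_conj (hK : IsPSDKernelOn K S) {g : X → ℂ}
    (hg : ∀ z ∈ S, g z ∈ ball (0 : ℂ) 1) :
    IsPSDKernelOn (fun z w => K z w / (1 - g z * conj (g w))) S := by
  have hterm : ∀ t : ℕ, IsPSDKernelOn (fun z w => g z ^ t * conj (g w ^ t) * K z w) S :=
    fun t => hK.mul_conj fun z => g z ^ t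
  have hgeom : ∀ z ∈ S, ∀ w ∈ S,
      HasSum (fun t : ℕ => g z ^ t * conj (g w ^ t) * K z w)
        (K z w / (1 - g z * conj (g w))) := by
    intro z hz w hw
    have hq := norm_mul_conj_lt_one (hg z hz) (hg w hw)
    simpa only [map_pow, ← mul_pow, div_eq_mul_inv, mul_comm (K z w)] using
      (hasSum_geometric_of_norm_lt_one hq).mul_right (K z w)
  exact (IsPSDKernelOn.tsum hterm fun z hz w hw => (hgeom z hz w hw).summable).congr
    fun z hz w hw => (hgeom z hz w hw).tsum_eq

end PSDKernel

theorem weighted_composition_kernel_psd_finite_family_general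
    (b : ℂ → ℂ) (N : ℕ) (f : ℕ → ℂ → ℂ)
    (hb_maps : ∀ z ∈ ball (0 : ℂ) 1, b z ∈ ball (0 : ℂ) 1)
    (hpos : IsPSDKernelOn
      (fun z w => (1 - b z * conj (b w)) / (1 - z * conj w) -
        ∑ m ∈ Finset.range (N + 1), f m z * conj (f m w))
      (ball (0 : ℂ) 1)) :
    IsPSDKernelOn
      (fun z w => (1 - z * conj w)⁻¹ -
        (∑ m ∈ Finset.range (N + 1), f m z * conj (f m w)) / (1 - b z * conj (b w)))
      (ball (0 : ℂ) 1) := by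
  refine (hpos.div_one_sub_mul_conj hb_maps).congr fun z hz w hw => ?_
  have hzw := one_sub_mul_conj_ne_zero hz hw
  have hb := one_sub_mul_conj_ne_zero (hb_maps z hz) (hb_maps w hw)
  field_simp

/-- Finite-family version: if the kernel
`k^b(z,w) − ∑_{m=0}^N f_m(z)·conj(f_m(w))` is positive semidefinite, then so is
`1/(1 − z·conj w) − (∑_{m=0}^N f_m(z)·conj(f_m(w)))/(1 − b(z)·conj(b(w)))`. -/
theorem weighted_composition_kernel_psd_finite_family
    (b : ℂ → ℂ) (N : ℕ) (f : ℕ → ℂ → ℂ)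
    (hb_holo : DifferentiableOn ℂ b (ball (0 : ℂ) 1))
    (hb_maps : ∀ z ∈ ball (0 : ℂ) 1, b z ∈ ball (0 : ℂ) 1)
    (hpos : IsPSDKernelOn
      (fun z w => (1 - b z * conj (b w)) / (1 - z * conj w) -
        ∑ m ∈ Finset.range (N + 1), f m z * conj (f m w))
      (ball (0 : ℂ) 1)) :
    IsPSDKernelOn
      (fun z w => (1 - z * conj w)⁻¹ -
        (∑ m ∈ Finset.range (N + 1), f m z * conj (f m w)) / (1 - b z * conj (b w)))
      (ball (0 : ℂ) 1) :=
  weighted_composition_kernel_psd_finite_family_general b N f hb_maps hpos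
end
end

section
/- Let b be a holomorphic map of the open unit disk 𝔻 ⊂ ℂ into the closed unit disk (|b(z)| ≤ 1 for all z ∈ 𝔻). Then the de Branges–Rovnyak kernel (z,w) ↦ (1 − b(z)·conj(b(w)))/(1 − z·conj(w)) is positive semidefinite on 𝔻. -/
/-!
On the circle of radius `r < 1`, the Szegő kernel `k_w(z) = (1 - z w̄ / r²)⁻¹` reproduces
holomorphic functions: the circle average of `f · conj k_w` is `f w` (Cauchy's formula). For the
points `xᵢ` and scalars `cᵢ` put `u = ∑ c̄ⱼ k_{xⱼ}` and `v = ∑ conj (cⱼ b(xⱼ)) k_{xⱼ}`. The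
quadratic form of `(1 - b(z) conj b(w)) k_w(z)` is then `⟨u, u⟩ - ⟨v, v⟩`, and `⟨b v, u⟩ = ⟨v, v⟩`,
so completing the square gives `⟨u, u⟩ - ⟨v, v⟩ = ‖u - b v‖² + ⟨(1 - |b|²) v, v⟩ ≥ 0`.
Letting `r → 1` yields the kernel of the unit disc.
-/

open Complex Metric ComplexConjugate
open scoped ComplexOrder

noncomputable section

open Real Filter Topology

theorem IsPSDKernelOn.of_tendsto {ι X : Type*} {l : Filter ι} [l.NeBot]
    {K : ι → X → X → ℂ} {K₀ : X → X → ℂ} {S : ι → Set X} {T : Set X}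
    (hT : ∀ x ∈ T, ∀ᶠ i in l, x ∈ S i) (hK : ∀ᶠ i in l, IsPSDKernelOn (K i) (S i))
    (hlim : ∀ x ∈ T, ∀ y ∈ T, Tendsto (fun i => K i x y) l (𝓝 (K₀ x y))) :
    IsPSDKernelOn K₀ T := by
  intro n x hx c
  have hxS : ∀ᶠ i in l, ∀ j, x j ∈ S i := eventually_all.2 fun j => hT _ (hx j)
  refine ge_of_tendsto (tendsto_finsetSum _ fun i _ => tendsto_finsetSum _ fun j _ =>
    (hlim _ (hx i) _ (hx j)).const_mul _) ?_
  filter_upwards [hK, hxS] with i hKi hxi using hKi n x hxi c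

theorem DiffContOnCl.continuousOn_sphere {𝕜 E F : Type*} [NontriviallyNormedField 𝕜]
    [NormedAddCommGroup E] [NormedSpace 𝕜 E] [NormedSpace ℝ E] [NormedAddCommGroup F]
    [NormedSpace 𝕜 F] {f : E → F} {c : E} {r : ℝ} (hf : DiffContOnCl 𝕜 f (ball c r))
    (hr : 0 ≤ r) : ContinuousOn f (sphere c |r|) := by
  rw [abs_of_nonneg hr]
  exact hf.continuousOn_ball.mono sphere_subset_closedBall

theorem DiffContOnCl.fun_sum {𝕜 E F : Type*} [NontriviallyNormedField 𝕜] [NormedAddCommGroup E]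
    [NormedSpace 𝕜 E] [NormedAddCommGroup F] [NormedSpace 𝕜 F] {ι : Type*} {s : Finset ι}
    {f : ι → E → F} {t : Set E} (h : ∀ i ∈ s, DiffContOnCl 𝕜 (f i) t) :
    DiffContOnCl 𝕜 (fun x => ∑ i ∈ s, f i x) t :=
  ⟨DifferentiableOn.fun_sum fun i hi => (h i hi).1, continuousOn_finsetSum _ fun i hi => (h i hi).2⟩

theorem ofReal_circleAverage (f : ℂ → ℝ) (c : ℂ) (R : ℝ) :
    ((circleAverage f c R : ℝ) : ℂ) = circleAverage (fun z => (f z : ℂ)) c R := by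
  simp [circleAverage_def, intervalIntegral.integral_ofReal]

def circlePairing (r : ℝ) (f g : ℂ → ℂ) : ℂ :=
  circleAverage (fun z => f z * conj (g z)) 0 r

theorem conj_circlePairing (r : ℝ) (f g : ℂ → ℂ) :
    conj (circlePairing r f g) = circlePairing r g f := by
  simp only [circlePairing, circleAverage_def, intervalIntegral, ← integral_conj, map_sub,
    real_smul, map_mul, conj_ofReal, Complex.conj_conj, mul_comm]

theorem circleIntegrable_mul_conj {r : ℝ} {f g : ℂ → ℂ} (hf : ContinuousOn f (sphere 0 |r|))
    (hg : ContinuousOn g (sphere 0 |r|)) : CircleIntegrable (fun z => f z * conj (g z)) 0 r :=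
  (hf.mul (Complex.continuous_conj.comp_continuousOn hg)).circleIntegrable'

theorem circlePairing_self_sub_nonneg {r : ℝ} {u v b : ℂ → ℂ}
    (hu : ContinuousOn u (sphere 0 |r|)) (hv : ContinuousOn v (sphere 0 |r|))
    (hb : ContinuousOn b (sphere 0 |r|)) (hb_le : ∀ z ∈ sphere (0 : ℂ) |r|, ‖b z‖ ≤ 1)
    (h : circlePairing r (b * v) u = circlePairing r v v) :
    0 ≤ circlePairing r u u - circlePairing r v v := by
  have hbv : ContinuousOn (b * v) (sphere 0 |r|) := hb.mul hv
  have h' : circlePairing r u (b * v) = circlePairing r v v := by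
    rw [← conj_circlePairing, h, conj_circlePairing]
  have hsquare : ∀ z, ((normSq (u z - b z * v z) + (1 - normSq (b z)) * normSq (v z) : ℝ) : ℂ) =
      u z * conj (u z) - u z * conj ((b * v) z) - (b * v) z * conj (u z) + v z * conj (v z) := by
    intro z
    simp only [Pi.mul_apply]
    push_cast
    simp only [← mul_conj, map_sub, map_mul]
    ring
  have huu := circleIntegrable_mul_conj hu hu
  have hubv := circleIntegrable_mul_conj hu hbv
  have hbvu := circleIntegrable_mul_conj hbv hu
  have hvv := circleIntegrable_mul_conj hv hv
  have hdefect : circlePairing r u u - circlePairing r v v = circleAverage (fun z =>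
      ((normSq (u z - b z * v z) + (1 - normSq (b z)) * normSq (v z) : ℝ) : ℂ)) 0 r := by
    simp only [hsquare]
    rw [circleAverage_fun_add ?_ hvv, circleAverage_fun_sub ?_ hbvu,
      circleAverage_fun_sub huu hubv]
    · simp only [circlePairing] at h h' ⊢
      rw [h, h']
      ring
    · exact huu.sub hubv
    · exact (huu.sub hubv).sub hbvu
  rw [hdefect, ← ofReal_circleAverage, zero_le_real]
  refine circleAverage_nonneg_of_nonneg fun z hz => ?_
  have hb_sq : normSq (b z) ≤ 1 := by
    rw [normSq_eq_norm_sq]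
    exact pow_le_one₀ (norm_nonneg _) (hb_le z hz)
  nlinarith [normSq_nonneg (u z - b z * v z), normSq_nonneg (v z)]

def szegoKernel (r : ℝ) (w z : ℂ) : ℂ := (1 - z * conj w / (r : ℂ) ^ 2)⁻¹

theorem conj_szegoKernel_of_mem_sphere {r : ℝ} {w z : ℂ} (hr : r ≠ 0)
    (hz : z ∈ sphere (0 : ℂ) |r|) (hzw : z ≠ w) : conj (szegoKernel r w z) = z / (z - w) := by
  have hz0 : z ≠ 0 := by rintro rfl; simp [eq_comm, hr] at hz
  have hzz : conj z * z = (r : ℂ) ^ 2 := by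
    rw [mul_comm, mul_conj, normSq_eq_norm_sq, mem_sphere_zero_iff_norm.1 hz, sq_abs]
    push_cast; rfl
  rw [szegoKernel, map_inv₀, map_sub, map_one, map_div₀, map_mul, Complex.conj_conj, map_pow,
    conj_ofReal, ← hzz, mul_div_mul_left _ _ ((map_ne_zero _).2 hz0), one_sub_div hz0, inv_div]

theorem norm_mul_conj_div_sq_lt_one {r : ℝ} {w z : ℂ} (hw : w ∈ ball (0 : ℂ) r)
    (hz : z ∈ closedBall (0 : ℂ) r) : ‖z * conj w / (r : ℂ) ^ 2‖ < 1 := by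
  rw [mem_ball_zero_iff] at hw
  rw [mem_closedBall_zero_iff] at hz
  have hr : 0 < r := (norm_nonneg w).trans_lt hw
  rw [norm_div, norm_mul, RCLike.norm_conj, norm_pow, norm_real, Real.norm_of_nonneg hr.le,
    div_lt_one (by positivity), sq]
  exact mul_lt_mul_of_nonneg_of_pos' hz hw (norm_nonneg _) hr

theorem diffContOnCl_szegoKernel {r : ℝ} {w : ℂ} (hw : w ∈ ball (0 : ℂ) r) :
    DiffContOnCl ℂ (szegoKernel r w) (ball 0 r) := by
  refine DifferentiableOn.diffContOnCl_ball (U := closedBall 0 r) ?_ subset_rfl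
  refine ((differentiableOn_const _).sub (by fun_prop)).inv fun z hz => sub_ne_zero.2 fun h => ?_
  simpa [← h] using norm_mul_conj_div_sq_lt_one hw hz

theorem circlePairing_szegoKernel {r : ℝ} {w : ℂ} {f : ℂ → ℂ} (hf : DiffContOnCl ℂ f (ball 0 r))
    (hw : w ∈ ball (0 : ℂ) r) : circlePairing r f (szegoKernel r w) = f w := by
  have hr : 0 < r := pos_of_mem_ball hw
  rw [← abs_of_pos hr] at hf hw
  rw [← hf.circleAverage_smul_div hw, circlePairing]
  refine circleAverage_congr_sphere fun z hz => ?_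
  have hzw : z ≠ w := by
    rintro rfl
    exact (mem_ball_zero_iff.1 hw).ne (mem_sphere_zero_iff_norm.1 hz)
  rw [conj_szegoKernel_of_mem_sphere hr.ne' hz hzw, sub_zero, smul_eq_mul, mul_comm]

theorem circlePairing_sum_szegoKernel {ι : Type*} (s : Finset ι) {r : ℝ} (hr : 0 ≤ r)
    {x d : ι → ℂ} (hx : ∀ j ∈ s, x j ∈ ball (0 : ℂ) r) {f : ℂ → ℂ}
    (hf : DiffContOnCl ℂ f (ball 0 r)) :
    circlePairing r f (fun z => ∑ j ∈ s, conj (d j) * szegoKernel r (x j) z) =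
      ∑ j ∈ s, d j * f (x j) := by
  have hint : ∀ j ∈ s, CircleIntegrable (fun z => f z * conj (szegoKernel r (x j) z)) 0 r :=
    fun j hj => circleIntegrable_mul_conj (hf.continuousOn_sphere hr)
      ((diffContOnCl_szegoKernel (hx j hj)).continuousOn_sphere hr)
  calc circlePairing r f (fun z => ∑ j ∈ s, conj (d j) * szegoKernel r (x j) z)
      = circleAverage (fun z => ∑ j ∈ s, d j • (f z * conj (szegoKernel r (x j) z))) 0 r := by
        simp only [circlePairing, map_sum, map_mul, Complex.conj_conj, Finset.mul_sum,
          smul_eq_mul, mul_left_comm]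
    _ = ∑ j ∈ s, d j * circlePairing r f (szegoKernel r (x j)) := by
        rw [circleAverage_fun_sum (f := fun j z => d j • (f z * conj (szegoKernel r (x j) z)))
          fun j hj => (hint j hj).const_smul]
        exact Finset.sum_congr rfl fun j _ => circleAverage_fun_smul
    _ = ∑ j ∈ s, d j * f (x j) :=
        Finset.sum_congr rfl fun j hj => by rw [circlePairing_szegoKernel hf (hx j hj)]

theorem isPSDKernelOn_mul_szegoKernel {r : ℝ} {b : ℂ → ℂ} (hb : DiffContOnCl ℂ b (ball 0 r))
    (hb_le : ∀ z ∈ sphere (0 : ℂ) r, ‖b z‖ ≤ 1) :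
    IsPSDKernelOn (fun z w => (1 - b z * conj (b w)) * szegoKernel r w z) (ball 0 r) := by
  intro n x hx c
  rcases isEmpty_or_nonempty (Fin n) with _ | ⟨⟨i₀⟩⟩
  · simp
  have hr : 0 < r := pos_of_mem_ball (hx i₀)
  have hcomb (d : Fin n → ℂ) :
      DiffContOnCl ℂ (fun z => ∑ j, conj (d j) * szegoKernel r (x j) z) (ball 0 r) :=
    DiffContOnCl.fun_sum fun j _ => by
      simpa only [Pi.smul_def, smul_eq_mul] using
        (diffContOnCl_szegoKernel (hx j)).const_smul (conj (d j))
  have pairing {f : ℂ → ℂ} (hf : DiffContOnCl ℂ f (ball 0 r)) (d : Fin n → ℂ) :=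
    circlePairing_sum_szegoKernel Finset.univ hr.le (fun j _ => hx j) (d := d) hf
  set u : ℂ → ℂ := fun z => ∑ j, conj (c j) * szegoKernel r (x j) z
  set v : ℂ → ℂ := fun z => ∑ j, conj (c j * b (x j)) * szegoKernel r (x j) z
  have hu : DiffContOnCl ℂ u (ball 0 r) := hcomb c
  have hv : DiffContOnCl ℂ v (ball 0 r) := hcomb fun j => c j * b (x j)
  have hbv : DiffContOnCl ℂ (b * v) (ball 0 r) := hb.smul hv
  have hform : ∑ i, ∑ j, c i * conj (c j) * ((1 - b (x i) * conj (b (x j))) *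
      szegoKernel r (x j) (x i)) = circlePairing r u u - circlePairing r v v := by
    rw [pairing hu c, pairing hv fun j => c j * b (x j)]
    simp only [u, v, Finset.mul_sum, ← Finset.sum_sub_distrib]
    refine Finset.sum_congr rfl fun i _ => Finset.sum_congr rfl fun j _ => ?_
    simp only [map_mul]
    ring
  have hreproduce : circlePairing r (b * v) u = circlePairing r v v := by
    rw [pairing hbv c, pairing hv fun j => c j * b (x j)]
    simp only [Pi.mul_apply, mul_assoc]
  rw [← abs_of_pos hr] at hb_le
  rw [hform]
  exact circlePairing_self_sub_nonneg (hu.continuousOn_sphere hr.le)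
    (hv.continuousOn_sphere hr.le) (hb.continuousOn_sphere hr.le) hb_le hreproduce

theorem tendsto_szegoKernel_nhds_one {w z : ℂ} (h : 1 - z * conj w ≠ 0) :
    Tendsto (fun r : ℝ => szegoKernel r w z) (𝓝 1) (𝓝 (1 - z * conj w)⁻¹) := by
  have hcont : ContinuousAt (fun r : ℝ => szegoKernel r w z) 1 := by
    unfold szegoKernel
    fun_prop (disch := simp [h])
  simpa [szegoKernel] using hcont.tendsto

/-- For a holomorphic map `b` of the disk into the closed unit disk, the
de Branges–Rovnyak kernel `(1 − b(z)·conj(b(w)))/(1 − z·conj w)` is positive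
semidefinite on the open unit disk. -/
theorem deBrangesRovnyak_kernel_psd
    (b : ℂ → ℂ)
    (hb_holo : DifferentiableOn ℂ b (ball (0 : ℂ) 1))
    (hb_maps : ∀ z ∈ ball (0 : ℂ) 1, ‖b z‖ ≤ 1) :
    IsPSDKernelOn
      (fun z w => (1 - b z * conj (b w)) / (1 - z * conj w))
      (ball (0 : ℂ) 1) := by
  refine IsPSDKernelOn.of_tendsto (l := 𝓝[<] 1) (S := fun r => ball 0 r)
    (K := fun r z w => (1 - b z * conj (b w)) * szegoKernel r w z) ?_ ?_ ?_
  · intro z hz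
    filter_upwards [Ioo_mem_nhdsLT (mem_ball_zero_iff.1 hz)] with r hr
    exact mem_ball_zero_iff.2 hr.1
  · filter_upwards [self_mem_nhdsWithin] with r (hr : r < 1)
    have hsub : closedBall (0 : ℂ) r ⊆ ball 0 1 := closedBall_subset_ball hr
    exact isPSDKernelOn_mul_szegoKernel (hb_holo.diffContOnCl_ball hsub)
      fun z hz => hb_maps z (hsub (sphere_subset_closedBall hz))
  · intro z hz w hw
    have hzw : 1 - z * conj w ≠ 0 := sub_ne_zero.2 fun h => by
      simpa [← h] using norm_mul_conj_div_sq_lt_one (r := 1) hw (ball_subset_closedBall hz)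
    simpa only [div_eq_mul_inv] using
      ((tendsto_szegoKernel_nhds_one hzw).mono_left nhdsWithin_le_nhds).const_mul _
end
end

section
/- Let b be a holomorphic map of the open unit disk 𝔻 ⊂ ℂ into itself, let α ≥ 1 be an integer, and let f : 𝔻 → ℂ. If the kernel (z,w) ↦ ((1 − b(z)·conj(b(w)))/(1 − z·conj(w)))^α − f(z)·conj(f(w)) is positive semidefinite on 𝔻, then the kernel (z,w) ↦ (1 − z·conj(w))^{−α} − f(z)·conj(f(w))·(1 − b(z)·conj(b(w)))^{−α} is positive semidefinite on 𝔻. (This is the kernel form of the estimate ‖M_f C_b‖ ≤ ‖f‖_{A(b,α)} on the weighted Bergman space A²_α.) -/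
/-!
The kernel in the conclusion is the Schur product of `(1 - b z * conj (b w))⁻¹ ^ α` with the
kernel in the hypothesis. The first factor is positive semidefinite as a power of the pulled-back
Szegő kernel `∑ₘ b z ^ m * conj (b w ^ m)`, a convergent sum of rank-one kernels, and entrywise
products of positive semidefinite kernels are positive semidefinite by the Schur product theorem.
-/

open Complex Metric ComplexConjugate
open scoped ComplexOrder

noncomputable section

lemma Complex.norm_mul_conj_lt_one {a b : ℂ} (ha : ‖a‖ < 1) (hb : ‖b‖ < 1) :
    ‖a * conj b‖ < 1 := by
  rw [norm_mul, RCLike.norm_conj]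
  exact mul_lt_one_of_nonneg_of_lt_one_left (norm_nonneg a) ha hb.le

section

open Matrix

variable {X : Type*} {K L : X → X → ℂ} {S : Set X}

lemma sum_mul_conj_mul_eq_star_dotProduct_mulVec {n : ℕ} (x : Fin n → X)
    (c : Fin n → ℂ) :
    ∑ i, ∑ j, c i * conj (c j) * K (x i) (x j) =
      star (star c) ⬝ᵥ ((Matrix.of fun i j => K (x i) (x j)) *ᵥ star c) := by
  simp only [dotProduct, mulVec, Finset.mul_sum, star_star, Pi.star_apply, of_apply]
  refine Finset.sum_congr rfl fun i _ => Finset.sum_congr rfl fun j _ => ?_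
  rw [RCLike.star_def]
  ring

theorem isPSDKernelOn_iff_posSemidef :
    IsPSDKernelOn K S ↔ ∀ (n : ℕ) (x : Fin n → X), (∀ i, x i ∈ S) →
      (Matrix.of fun i j => K (x i) (x j)).PosSemidef := by
  refine forall_congr' fun n => forall_congr' fun x => imp_congr_right fun _ => ?_
  simp only [sum_mul_conj_mul_eq_star_dotProduct_mulVec, star_star]
  refine ⟨fun h => ?_, fun hA c => by simpa using hA.dotProduct_mulVec_nonneg (star c)⟩
  -- over `ℂ`, a nonnegative quadratic form is automatically Hermitian
  rw [← Matrix.isPositive_toEuclideanLin_iff, LinearMap.isPositive_iff_complex]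
  intro v
  have hv := h (star v)
  simp only [EuclideanSpace.inner_eq_star_dotProduct, star_star, ofLp_toLpLin, toLin'_apply]
    at hv ⊢
  obtain ⟨hre, him⟩ := Complex.nonneg_iff.1 hv
  rw [dotProduct_star, dotProduct_comm, Complex.star_def, Complex.conj_eq_iff_im.2 him.symm]
  exact ⟨Complex.ext rfl (by simp [him]), hre⟩

theorem isPSDKernelOn_mul_conj (g : X → ℂ) :
    IsPSDKernelOn (fun z w => g z * conj (g w)) S := fun n x _ c => by
  have h : ∑ i, ∑ j, c i * conj (c j) * (g (x i) * conj (g (x j))) =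
      (∑ i, c i * g (x i)) * conj (∑ j, c j * g (x j)) := by
    rw [map_sum, Finset.sum_mul_sum]
    refine Finset.sum_congr rfl fun i _ => Finset.sum_congr rfl fun j _ => ?_
    rw [map_mul]
    ring
  rw [h, Complex.mul_conj]
  exact Complex.zero_le_real.2 (Complex.normSq_nonneg _)

namespace IsPSDKernelOn

theorem congr_s8 (hK : IsPSDKernelOn K S) (h : ∀ z ∈ S, ∀ w ∈ S, K z w = L z w) :
    IsPSDKernelOn L S := fun n x hx c => by
  simpa only [h _ (hx _) _ (hx _)] using hK n x hx c

theorem mul (hK : IsPSDKernelOn K S) (hL : IsPSDKernelOn L S) :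
    IsPSDKernelOn (fun z w => K z w * L z w) S := by
  rw [isPSDKernelOn_iff_posSemidef] at *
  exact fun n x hx => (hK n x hx).hadamard (hL n x hx)

theorem pow (hK : IsPSDKernelOn K S) (m : ℕ) : IsPSDKernelOn (fun z w => K z w ^ m) S := by
  induction m with
  | zero => simpa using isPSDKernelOn_mul_conj (S := S) (fun _ : X => (1 : ℂ))
  | succ m ih => simpa only [pow_succ] using ih.mul hK

theorem of_hasSum {Kₘ : ℕ → X → X → ℂ} (hKₘ : ∀ m, IsPSDKernelOn (Kₘ m) S)
    (hsum : ∀ z ∈ S, ∀ w ∈ S, HasSum (fun m => Kₘ m z w) (K z w)) : IsPSDKernelOn K S :=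
  fun n x hx c => by
  have h : HasSum (fun m => ∑ i, ∑ j, c i * conj (c j) * Kₘ m (x i) (x j))
      (∑ i, ∑ j, c i * conj (c j) * K (x i) (x j)) :=
    hasSum_sum fun i _ => hasSum_sum fun j _ => (hsum _ (hx i) _ (hx j)).mul_left _
  exact h.nonneg fun m => hKₘ m n x hx c

end IsPSDKernelOn

theorem isPSDKernelOn_inv_one_sub_mul_conj (g : X → ℂ)
    (hg : ∀ z ∈ S, ‖g z‖ < 1) : IsPSDKernelOn (fun z w => (1 - g z * conj (g w))⁻¹) S := by
  refine IsPSDKernelOn.of_hasSum (fun m => isPSDKernelOn_mul_conj fun z => g z ^ m)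
    fun z hz w hw => ?_
  simpa only [map_pow, mul_pow] using
    hasSum_geometric_of_norm_lt_one (Complex.norm_mul_conj_lt_one (hg z hz) (hg w hw))

end

theorem weighted_composition_kernel_psd_bergman_general
    (b f : ℂ → ℂ) (α : ℕ)
    (hb_maps : ∀ z ∈ ball (0 : ℂ) 1, b z ∈ ball (0 : ℂ) 1)
    (hpos : IsPSDKernelOn
      (fun z w => ((1 - b z * conj (b w)) / (1 - z * conj w)) ^ α - f z * conj (f w))
      (ball (0 : ℂ) 1)) :
    IsPSDKernelOn
      (fun z w => ((1 - z * conj w) ^ α)⁻¹ -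
        f z * conj (f w) * ((1 - b z * conj (b w)) ^ α)⁻¹)
      (ball (0 : ℂ) 1) := by
  have hb : ∀ z ∈ ball (0 : ℂ) 1, ‖b z‖ < 1 := fun z hz => mem_ball_zero_iff.1 (hb_maps z hz)
  refine (((isPSDKernelOn_inv_one_sub_mul_conj b hb).pow α).mul hpos).congr_s8
    fun z hz w hw => ?_
  have hB : 1 - b z * conj (b w) ≠ 0 := sub_ne_zero.2 fun h =>
    (Complex.norm_mul_conj_lt_one (hb z hz) (hb w hw)).ne (by rw [← h, norm_one])
  rw [div_pow, inv_pow, mul_sub, ← mul_div_assoc, inv_mul_cancel₀ (pow_ne_zero α hB)]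
  ring

/-- Kernel form of `‖M_f C_b‖ ≤ ‖f‖_{A(b,α)}` on the weighted Bergman space
`A²_α` (integer `α ≥ 1`): if `k^{b,α}(z,w) − f(z)·conj(f(w))` is positive
semidefinite, then so is
`(1 − z·conj w)^{−α} − f(z)·conj(f(w))·(1 − b(z)·conj(b(w)))^{−α}`. -/
theorem weighted_composition_kernel_psd_bergman
    (b f : ℂ → ℂ) (α : ℕ) (hα : 1 ≤ α)
    (hb_holo : DifferentiableOn ℂ b (ball (0 : ℂ) 1))
    (hb_maps : ∀ z ∈ ball (0 : ℂ) 1, b z ∈ ball (0 : ℂ) 1)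
    (hpos : IsPSDKernelOn
      (fun z w => ((1 - b z * conj (b w)) / (1 - z * conj w)) ^ α - f z * conj (f w))
      (ball (0 : ℂ) 1)) :
    IsPSDKernelOn
      (fun z w => ((1 - z * conj w) ^ α)⁻¹ -
        f z * conj (f w) * ((1 - b z * conj (b w)) ^ α)⁻¹)
      (ball (0 : ℂ) 1) :=
  weighted_composition_kernel_psd_bergman_general b f α hb_maps hpos
end
end

section
/- Let X be a set, let n ≥ 1, let c : X → 𝔹ⁿ be any map into the open unit ball 𝔹ⁿ = {z ∈ ℂⁿ : ∑_{i=1}^n |z_i|² < 1}, and let β ≥ 0 be a real number. Then the kernel (x,y) ↦ (1 − ⟨c(x), c(y)⟩)^{−β} (principal branch of the complex power; note Re(1 − ⟨c(x),c(y)⟩) > 0) is positive semidefinite on X, where ⟨z,w⟩ = ∑_{i=1}^n z_i·conj(w_i). -/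
/-!
Positive semidefinite matrices are closed under Hadamard products (Schur), nonnegative
combinations and entrywise limits, hence under entrywise application of a power series with
nonnegative coefficients. The Gram kernel `t = ⟨c x, c y⟩` is positive semidefinite with values in
the unit disc, so `-log (1 - t) = ∑ tᵏ / k` is positive semidefinite, and then so is
`(1 - t) ^ (-β) = exp (β · (-log (1 - t))) = ∑ βᵏ (-log (1 - t))ᵏ / k!`.
-/

open Complex Metric ComplexConjugate
open scoped ComplexOrder

noncomputable section

namespace Matrix

variable {ι : Type*}

section RCLike

variable {𝕜 : Type*} [RCLike 𝕜]

theorem isClosed_setOf_posSemidef : IsClosed {A : Matrix ι ι 𝕜 | A.PosSemidef} := by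
  simp only [PosSemidef, IsHermitian, Set.ofPred_and, Set.ofPred_forall]
  refine (isClosed_eq continuous_id.matrix_conjTranspose continuous_id).inter
    (isClosed_iInter fun x => isClosed_le continuous_const ?_)
  exact continuous_finsetSum _ fun i _ => continuous_finsetSum _ fun j _ =>
    (continuous_const.mul (continuous_apply_apply i j)).mul continuous_const

theorem posSemidef_of_const_one : (of fun _ _ => 1 : Matrix ι ι 𝕜).PosSemidef := by
  refine ⟨by ext; simp, fun x => ?_⟩
  simpa [Finsupp.sum, ← Finset.mul_sum, ← Finset.sum_mul, ← star_sum] using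
    star_mul_self_nonneg (x.sum fun _ xi => xi)

theorem PosSemidef.map_pow {A : Matrix ι ι 𝕜} (hA : A.PosSemidef) :
    ∀ k : ℕ, (A.map (· ^ k)).PosSemidef
  | 0 => by simpa [map] using posSemidef_of_const_one
  | k + 1 => by
    have : A.map (· ^ (k + 1)) = A.map (· ^ k) ⊙ A := by ext; simp [pow_succ]
    exact this ▸ (hA.map_pow k).hadamard hA

theorem PosSemidef.of_hasSum_map_pow {A B : Matrix ι ι 𝕜} (hA : A.PosSemidef) {a : ℕ → ℝ}
    (ha : ∀ k, 0 ≤ a k) (hB : ∀ i j, HasSum (fun k => (a k : 𝕜) * A i j ^ k) (B i j)) :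
    B.PosSemidef := by
  have hsum : HasSum (fun k => a k • A.map (· ^ k)) B :=
    Pi.hasSum.2 fun i => Pi.hasSum.2 fun j => by simpa [RCLike.real_smul_eq_coe_mul] using hB i j
  exact isClosed_setOf_posSemidef.mem_of_tendsto hsum
    (Filter.Eventually.of_forall fun s => posSemidef_sum s fun k _ => (hA.map_pow k).smul (ha k))

end RCLike

variable {A : Matrix ι ι ℂ}

theorem PosSemidef.map_exp (hA : A.PosSemidef) : (A.map exp).PosSemidef :=
  hA.of_hasSum_map_pow (a := fun k => (k.factorial : ℝ)⁻¹) (fun k => by positivity) fun i j => by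
    simpa [exp_eq_exp_ℂ, div_eq_inv_mul] using NormedSpace.expSeries_div_hasSum_exp (A i j)

theorem PosSemidef.map_neg_log_one_sub (hA : A.PosSemidef) (hA1 : ∀ i j, ‖A i j‖ < 1) :
    (A.map fun z => -log (1 - z)).PosSemidef :=
  hA.of_hasSum_map_pow (a := fun k => (k : ℝ)⁻¹) (fun k => by positivity) fun i j => by
    simpa [div_eq_inv_mul] using hasSum_taylorSeries_neg_log (hA1 i j)

theorem PosSemidef.map_one_sub_cpow_neg (hA : A.PosSemidef) (hA1 : ∀ i j, ‖A i j‖ < 1) {β : ℝ}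
    (hβ : 0 ≤ β) : (A.map fun z => (1 - z) ^ (-(β : ℂ))).PosSemidef := by
  have hne : ∀ i j, 1 - A i j ≠ 0 := fun i j h => by
    simpa [← sub_eq_zero.1 h] using hA1 i j
  have : A.map (fun z => (1 - z) ^ (-(β : ℂ))) = (β • A.map fun z => -log (1 - z)).map exp := by
    ext i j
    simp [cpow_def_of_ne_zero (hne i j), mul_comm]
  exact this ▸ ((hA.map_neg_log_one_sub hA1).smul hβ).map_exp

end Matrix

theorem isPSDKernelOn_univ_of_posSemidef {X : Type*} {K : X → X → ℂ}
    (hK : ∀ (N : ℕ) (x : Fin N → X), (Matrix.of fun i j => K (x i) (x j)).PosSemidef) :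
    IsPSDKernelOn K Set.univ := by
  intro N x _ c
  simpa [dotProduct, Matrix.mulVec, Finset.mul_sum, mul_left_comm, mul_comm] using
    (hK N x).dotProduct_mulVec_nonneg (star c)

theorem norm_inner_lt_one {𝕜 E : Type*} [RCLike 𝕜] [NormedAddCommGroup E] [InnerProductSpace 𝕜 E]
    {u v : E} (hu : ‖u‖ < 1) (hv : ‖v‖ < 1) : ‖(inner 𝕜 u v : 𝕜)‖ < 1 :=
  (norm_inner_le_norm u v).trans_lt (mul_lt_one_of_nonneg_of_lt_one_left (norm_nonneg u) hu hv.le)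

theorem ball_power_kernel_psd_general
    {X : Type*} (n : ℕ)
    (c : X → EuclideanSpace ℂ (Fin n))
    (hc : ∀ x, c x ∈ ball (0 : EuclideanSpace ℂ (Fin n)) 1)
    (β : ℝ) (hβ : 0 ≤ β) :
    IsPSDKernelOn
      (fun x y => (1 - ∑ i, c x i * conj (c y i)) ^ (-(β : ℂ)))
      (Set.univ : Set X) := by
  refine isPSDKernelOn_univ_of_posSemidef fun N x => ?_
  -- `∑ i, z i * conj (w i) = ⟪w, z⟫`, so the kernel matrix is the transposed Gram matrix.
  have hT := (Matrix.posSemidef_gram ℂ (c ∘ x)).transpose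
  have hT1 : ∀ i j, ‖(Matrix.gram ℂ (c ∘ x)).transpose i j‖ < 1 := fun i j =>
    norm_inner_lt_one (mem_ball_zero_iff.1 (hc (x j))) (mem_ball_zero_iff.1 (hc (x i)))
  convert hT.map_one_sub_cpow_neg hT1 hβ using 1
  ext i j
  simp [Matrix.gram_apply, PiLp.inner_apply]

/-- For any map `c` of a set `X` into the open unit ball of `ℂⁿ` and any real
`β ≥ 0`, the kernel `(1 − ⟨c(x), c(y)⟩)^{−β}` (principal branch) is positive
semidefinite on `X`; here `⟨z,w⟩ = ∑ zᵢ·conj(wᵢ)`. -/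
theorem ball_power_kernel_psd
    {X : Type*} (n : ℕ) (hn : 1 ≤ n)
    (c : X → EuclideanSpace ℂ (Fin n))
    (hc : ∀ x, c x ∈ ball (0 : EuclideanSpace ℂ (Fin n)) 1)
    (β : ℝ) (hβ : 0 ≤ β) :
    IsPSDKernelOn
      (fun x y => (1 - ∑ i, c x i * conj (c y i)) ^ (-(β : ℂ)))
      (Set.univ : Set X) :=
  ball_power_kernel_psd_general n c hc β hβ
end
end
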